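/- In the special case P = 0 of the trace identity: if |a| < 1, |b| = 1, and ω_{ij} (j ∈ K_i, finitely many nonempty K_i) are complex numbers of modulus 1 such that Σ_i (-1)^{i(f+1)} a^{-if} Σ_{j∈K_i} ω_{ij}^f = 0 for all integers f ≥ 1, then all the sets K_i are empty. -/

import Mathlib

/-!
Suppose some `K i` is nonempty and let `i₀` be the largest such index. Multiplying the
identity by `a ^ (i₀ f)` expresses the power sum `∑ j, ω i₀ j ^ f` as a combination of
bounded quantities weighted by `(a ^ (i₀ - i)) ^ f` with `i < i₀`, so it tends to `0` as
`f → ∞`. But the powers of a point of the compact group `Circleⁿ` return to every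
neighbourhood of `1` infinitely often, so for infinitely many `f` every `ω i₀ j ^ f` has real
part `> 1/2`, and then the power sum has norm `> 1/2`.
-/

open Filter Topology

theorem frequently_pow_mem_nhds_one {G : Type*} [Group G] [TopologicalSpace G]
    [IsTopologicalGroup G] [CompactSpace G] (g : G) {U : Set G} (hU : U ∈ 𝓝 1) :
    ∃ᶠ n in atTop, g ^ n ∈ U := by
  obtain ⟨x, -, hx⟩ := isCompact_univ.exists_mapClusterPt (f := atTop) (u := (g ^ · : ℕ → G))
    (by simp)
  obtain ⟨V, hV, hVU⟩ := exists_nhds_split_inv hU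
  -- `g ^ n * x⁻¹ ∈ V` and `g ^ m * x⁻¹ ∈ V` give `g ^ (n - m) = (g ^ n * x⁻¹) / (g ^ m * x⁻¹) ∈ U`.
  have hnear : ∃ᶠ n in atTop, g ^ n * x⁻¹ ∈ V :=
    mapClusterPt_iff_frequently.1 hx _
      ((continuous_mul_const x⁻¹).tendsto' x 1 (mul_inv_cancel x) hV)
  refine frequently_atTop.2 fun M ↦ ?_
  obtain ⟨m, hm⟩ := hnear.exists
  obtain ⟨n, hmn, hn⟩ := frequently_atTop.1 hnear (m + M)
  refine ⟨n - m, by omega, ?_⟩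
  have := hVU _ hn _ hm
  rwa [div_eq_mul_inv, mul_inv_rev, inv_inv, mul_assoc, inv_mul_cancel_left,
    ← pow_sub _ (by omega : m ≤ n)] at this

theorem not_tendsto_sum_pow_zero {ι : Type*} [Fintype ι] [Nonempty ι] (ω : ι → ℂ)
    (hω : ∀ j, ‖ω j‖ = 1) : ¬ Tendsto (fun n : ℕ ↦ ∑ j, ω j ^ n) atTop (𝓝 0) := by
  let z : ι → Circle := fun j ↦ ⟨ω j, mem_sphere_zero_iff_norm.2 (hω j)⟩
  let U : Set (ι → Circle) := {y | ∀ j, 1 / 2 < ((y j : ℂ)).re}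
  have hU : U ∈ 𝓝 1 := by
    refine IsOpen.mem_nhds ?_ fun j ↦ by norm_num
    simp only [U, Set.ofPred_forall]
    exact isOpen_iInter_of_finite fun j ↦ isOpen_lt continuous_const
      (Complex.continuous_re.comp (continuous_subtype_val.comp (continuous_apply j)))
  intro hlim
  have hsmall : ∀ᶠ n in atTop, ‖∑ j, ω j ^ n‖ < 1 / 2 := by
    simpa using hlim.norm.eventually (gt_mem_nhds (by norm_num))
  obtain ⟨n, hn, hsmall_n⟩ := ((frequently_pow_mem_nhds_one z hU).and_eventually hsmall).exists
  have hlarge : (1 / 2 : ℝ) < ‖∑ j, ω j ^ n‖ := calc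
    (1 / 2 : ℝ) ≤ ∑ _j : ι, (1 / 2 : ℝ) := by simp [Nat.one_le_iff_ne_zero]
    _ < ∑ j, (ω j ^ n).re := Finset.sum_lt_sum_of_nonempty Finset.univ_nonempty fun j _ ↦ hn j
    _ = (∑ j, ω j ^ n).re := (Complex.re_sum _ _).symm
    _ ≤ ‖∑ j, ω j ^ n‖ := Complex.re_le_norm _
  exact hlarge.not_gt hsmall_n

theorem tendsto_zero_of_sum_zpow_mul_eq_zero {𝕜 : Type*} [NormedField 𝕜] {a : 𝕜}
    (ha0 : a ≠ 0) (ha : ‖a‖ < 1) {S : Finset ℤ} {i₀ : ℤ} (hi₀ : i₀ ∈ S) {c : ℤ → ℕ → 𝕜}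
    (hc : ∀ i ∈ S, i₀ < i → c i = 0)
    (hbdd : ∀ i ∈ S, IsBoundedUnder (· ≤ ·) atTop (norm ∘ c i))
    (hsum : ∀ᶠ f : ℕ in atTop, ∑ i ∈ S, a ^ (-i * f) * c i f = 0) :
    Tendsto (c i₀) atTop (𝓝 0) := by
  have hsolve : ∀ᶠ f : ℕ in atTop, -∑ i ∈ S.erase i₀, a ^ ((i₀ - i) * f) * c i f = c i₀ f := by
    filter_upwards [hsum] with f hf
    have hscaled : ∑ i ∈ S, a ^ ((i₀ - i) * f) * c i f = 0 := by
      rw [← mul_zero (a ^ (i₀ * f)), ← hf, Finset.mul_sum]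
      refine Finset.sum_congr rfl fun i _ ↦ ?_
      rw [← mul_assoc, ← zpow_add₀ ha0]
      ring_nf
    rw [← Finset.add_sum_erase S _ hi₀, sub_self, zero_mul, zpow_zero, one_mul] at hscaled
    linear_combination -hscaled
  refine Tendsto.congr' hsolve ?_
  suffices ∀ i ∈ S.erase i₀, Tendsto (fun f : ℕ ↦ a ^ ((i₀ - i) * f) * c i f) atTop (𝓝 0) by
    simpa using (tendsto_finsetSum _ this).neg
  intro i hi
  rcases lt_or_gt_of_ne (Finset.ne_of_mem_erase hi) with hlt | hgt
  · have hpow : ∀ f : ℕ, a ^ ((i₀ - i) * f) = (a ^ (i₀ - i)) ^ f := fun f ↦ by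
      rw [zpow_mul, zpow_natCast]
    have hlt_one : ‖a ^ (i₀ - i)‖ < 1 := by
      rw [norm_zpow]
      exact zpow_lt_one₀ (norm_pos_iff.2 ha0) ha (by omega)
    simp only [hpow]
    exact (tendsto_pow_atTop_nhds_zero_of_norm_lt_one hlt_one).zero_mul_isBoundedUnder_le
      (hbdd i (Finset.mem_of_mem_erase hi))
  · simp [hc i (Finset.mem_of_mem_erase hi) hgt]

theorem stmt_7_general (a : ℂ) (ha : ‖a‖ < 1) (ha0 : a ≠ 0)
    (S : Finset ℤ) (K : ℤ → ℕ) (hK : ∀ i ∉ S, K i = 0)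
    (ω : (i : ℤ) → Fin (K i) → ℂ) (hω : ∀ i j, ‖ω i j‖ = 1)
    (hid : ∀ f : ℕ, 1 ≤ f →
      ∑ i ∈ S, (-1 : ℂ) ^ (i * ((f : ℤ) + 1)) * a ^ (-(i : ℤ) * (f : ℤ)) *
          ∑ j, ω i j ^ f = 0) :
    ∀ i, K i = 0 := by
  by_contra! ⟨i, hi⟩
  set T := S.filter (K · ≠ 0)
  have hT : T.Nonempty := ⟨i, Finset.mem_filter.2 ⟨not_imp_comm.1 (hK i) hi, hi⟩⟩
  set i₀ := T.max' hT
  obtain ⟨hi₀S, hKi₀⟩ := Finset.mem_filter.1 (T.max'_mem hT)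
  have hvanish : ∀ i ∈ S, i₀ < i → K i = 0 := fun i hi hlt ↦
    not_ne_iff.1 fun h ↦ (T.le_max' i (Finset.mem_filter.2 ⟨hi, h⟩)).not_gt hlt
  let c : ℤ → ℕ → ℂ := fun i f ↦ (-1) ^ (i * ((f : ℤ) + 1)) * ∑ j, ω i j ^ f
  have hnorm : ∀ i f, ‖c i f‖ = ‖∑ j, ω i j ^ f‖ := by simp [c]
  have hlim : Tendsto (c i₀) atTop (𝓝 0) := by
    refine tendsto_zero_of_sum_zpow_mul_eq_zero ha0 ha hi₀S
      (fun i hi hlt ↦ by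
        have : IsEmpty (Fin (K i)) := by rw [hvanish i hi hlt]; infer_instance
        ext; simp [c])
      (fun i _ ↦ isBoundedUnder_of ⟨K i, fun f ↦ ?_⟩)
      (eventually_atTop.2 ⟨1, fun f hf ↦
        (Finset.sum_congr rfl fun i _ ↦ by ring).trans (hid f hf)⟩)
    calc ‖c i f‖ = ‖∑ j, ω i j ^ f‖ := hnorm i f
      _ ≤ ∑ j, ‖ω i j ^ f‖ := norm_sum_le _ _
      _ = K i := by simp [hω]
  have : Nonempty (Fin (K i₀)) := Fin.pos_iff_nonempty.1 (Nat.pos_of_ne_zero hKi₀)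
  refine not_tendsto_sum_pow_zero (ω i₀) (hω i₀) ?_
  simpa [tendsto_zero_iff_norm_tendsto_zero, hnorm] using hlim

/-- Special case `P = 0` of the trace identity: if `|a| < 1` (`a ≠ 0`), `|b| = 1`, and
`Σ_i (-1)^{i(f+1)} a^{-if} Σ_{j ∈ K_i} ω_{ij}^f = 0` for all integers `f ≥ 1`, where all
`|ω_{ij}| = 1` and only finitely many `K_i` are nonempty, then all the sets `K_i` are empty. -/
theorem stmt_7 (a b : ℂ) (ha : ‖a‖ < 1) (ha0 : a ≠ 0) (hb : ‖b‖ = 1)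
    (S : Finset ℤ) (K : ℤ → ℕ) (hK : ∀ i ∉ S, K i = 0)
    (ω : (i : ℤ) → Fin (K i) → ℂ) (hω : ∀ i j, ‖ω i j‖ = 1)
    (hid : ∀ f : ℕ, 1 ≤ f →
      ∑ i ∈ S, (-1 : ℂ) ^ (i * ((f : ℤ) + 1)) * a ^ (-(i : ℤ) * (f : ℤ)) *
          ∑ j, ω i j ^ f = 0) :
    ∀ i, K i = 0 :=
  stmt_7_general a ha ha0 S K hK ω hω hid
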